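/- Suppose $L : [0,T] \to \mathbb{R}$ is differentiable with $L(0) = 0$ and satisfies $\dot{L}(t) = u(L(t), t) + \sigma_a(t) - \delta L(t)^2$, where $\sigma_a$ is continuous with $\sigma_a(t) \geq \sigma_0 > 0$, $\delta > 0$, and $u(\cdot, t) \geq 0$. Then there exists $\varepsilon > 0$ such that $L(t) > 0$ and $\dot{L}(t) > u(L(t), t)$ for all $t \in (0, \varepsilon]$. -/
import Mathlib


theorem stmt7 (T : ℝ) (hT : 0 < T) (L : ℝ → ℝ) (u : ℝ → ℝ → ℝ) (σa : ℝ → ℝ)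
    (δ σ0 : ℝ) (hδ : 0 < δ) (hσ0 : 0 < σ0)
    (hσc : Continuous σa) (hσ : ∀ t, σ0 ≤ σa t)
    (hu : ∀ z t, 0 ≤ u z t)
    (hL0 : L 0 = 0)
    (hL : ∀ t ∈ Set.Icc (0:ℝ) T,
      HasDerivAt L (u (L t) t + σa t - δ * (L t) ^ 2) t) :
    ∃ ε > 0, ε ≤ T ∧ ∀ t ∈ Set.Ioc (0:ℝ) ε, 0 < L t ∧ u (L t) t < deriv L t := by
  have hLc0 : ContinuousAt L 0 := (hL 0 ⟨le_refl 0, hT.le⟩).continuousAt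
  have hcont0 : ContinuousAt (fun t => δ * (L t) ^ 2) 0 := by
    exact (continuousAt_const.mul (hLc0.pow 2))
  have hev : ∀ᶠ t in nhds (0:ℝ), δ * (L t) ^ 2 < σ0 := by
    have h0 : δ * (L 0) ^ 2 < σ0 := by simp [hL0, hσ0]
    exact hcont0.eventually_lt_const h0
  obtain ⟨r, hr, hball⟩ := Metric.eventually_nhds_iff.mp hev
  set ε := min T (r / 2) with hε
  have hε0 : 0 < ε := lt_min hT (by linarith)
  have hεT : ε ≤ T := min_le_left _ _
  have hεr : ε < r := lt_of_le_of_lt (min_le_right _ _) (by linarith)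
  have hbound : ∀ t ∈ Set.Icc (0:ℝ) ε, δ * (L t) ^ 2 < σ0 := by
    intro t ht
    apply hball
    rw [Real.dist_eq, sub_zero, abs_of_nonneg ht.1]
    exact lt_of_le_of_lt ht.2 hεr
  have hsub : Set.Icc (0:ℝ) ε ⊆ Set.Icc (0:ℝ) T := by
    intro t ht; exact ⟨ht.1, le_trans ht.2 hεT⟩
  have hderiv : ∀ t ∈ Set.Icc (0:ℝ) ε,
      deriv L t = u (L t) t + σa t - δ * (L t) ^ 2 := by
    intro t ht; exact (hL t (hsub ht)).deriv
  have hderivpos : ∀ t ∈ Set.Icc (0:ℝ) ε, 0 < deriv L t := by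
    intro t ht
    rw [hderiv t ht]
    have := hσ t
    have := hu (L t) t
    have := hbound t ht
    linarith
  have hmono : StrictMonoOn L (Set.Icc 0 ε) := by
    apply strictMonoOn_of_deriv_pos (convex_Icc 0 ε)
    · intro t ht; exact (hL t (hsub ht)).continuousAt.continuousWithinAt
    · intro t ht
      rw [interior_Icc] at ht
      exact hderivpos t ⟨le_of_lt ht.1, le_of_lt ht.2⟩
  refine ⟨ε, hε0, hεT, fun t ht => ?_⟩
  have htIcc : t ∈ Set.Icc (0:ℝ) ε := ⟨le_of_lt ht.1, ht.2⟩
  constructor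
  · have := hmono ⟨le_refl 0, hε0.le⟩ htIcc ht.1
    rwa [hL0] at this
  · rw [hderiv t htIcc]
    have := hσ t
    have := hbound t htIcc
    linarith
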